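/- Let L be an r×m integer matrix of full rank r such that every r×(m−1) submatrix of L (obtained by deleting one column) also has rank r. Let δ > 0 and let C_1, …, C_m be Borel measurable subsets of T = ℝ/ℤ. Then for every sufficiently large positive integer p there exist p-measurable sets A_1, …, A_m ⊆ T such that μ_T(C_i Δ A_i) ≤ δ/m for all i ∈ {1, …, m}, and |S_L(C_1, …, C_m) − S_L(A_1, …, A_m)| ≤ δ. -/

import Mathlib

/-!
A Borel set `C ⊆ 𝕋` lies between a closed, hence compact, set `F` and an open set `U` with
`μ(U \ F)` small. Once the mesh `1/p` is below the distance from `F` to `Uᶜ`, the union of the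
`p`-cells meeting `F` is `p`-measurable and squeezed between `F` and `U`.

Deleting column `j` keeps rank `r`, so `L` has a rational kernel vector with `j`-th entry `1`;
scaling it by any real `a` shows that the `j`-th coordinate map `ker_𝕋 L → 𝕋` is onto. A continuous
surjective homomorphism of compact groups carries Haar probability measure to Haar probability
measure, so `μ_L` of the preimage of `C_j Δ A_j` equals `μ_𝕋(C_j Δ A_j)`, and the two solution
sets differ only inside the union of these preimages.
-/

open MeasureTheory Set

noncomputable section

/-- The circle group `𝕋 = ℝ/ℤ`, with its normalized Haar (probability) measure `volume`. -/
abbrev 𝕋 : Type := AddCircle (1 : ℝ)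

/-- The group homomorphism `x ↦ Lx` induced by an integer matrix `L`. -/
def Lhom {r m : ℕ} (L : Matrix (Fin r) (Fin m) ℤ) (G : Type*) [AddCommGroup G] :
    (Fin m → G) →+ (Fin r → G) where
  toFun x := fun i => ∑ j, L i j • x j
  map_zero' := by ext i; simp
  map_add' x y := by ext i; simp [smul_add, Finset.sum_add_distrib]

/-- `ker_𝕋 L`, the closed subgroup `{x ∈ 𝕋^m : Lx = 0}` of `𝕋^m`. -/
def kerT {r m : ℕ} (L : Matrix (Fin r) (Fin m) ℤ) : AddSubgroup (Fin m → 𝕋) :=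
  (Lhom L 𝕋).ker

/-- `A ⊆ 𝕋` is `p`-measurable if it is a union of intervals `[(k-1)/p, k/p)` from the
`p`-partition of `𝕋`. -/
def PMeasurable (p : ℕ) (A : Set 𝕋) : Prop :=
  ∃ s : Finset (Fin p),
    A = ⋃ k ∈ s, (fun t : ℝ => (t : 𝕋)) '' Set.Ico ((k : ℝ) / p) (((k : ℝ) + 1) / p)

/-- The `r × (m-1)` submatrix of `L` obtained by deleting column `j` has rank `r` (over ℚ). -/
def DeletedColumnsFullRank {r m : ℕ} (L : Matrix (Fin r) (Fin m) ℤ) : Prop :=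
  ∀ j : Fin m,
    ((L.submatrix id (Subtype.val : {k : Fin m // k ≠ j} → Fin m)).map
      (Int.cast : ℤ → ℚ)).rank = r

open scoped symmDiff Matrix

def gridCell (p : ℕ) (k : Fin p) : Set 𝕋 :=
  (fun t : ℝ => (t : 𝕋)) '' Ico ((k : ℝ) / p) (((k : ℝ) + 1) / p)

lemma measurableSet_gridCell {p : ℕ} (k : Fin p) : MeasurableSet (gridCell p k) := by
  have hp : (1 : ℝ) ≤ p := by exact_mod_cast k.pos
  have hsub : Ico ((k : ℝ) / p) (((k : ℝ) + 1) / p) ⊆ Ico ((k : ℝ) / p) ((k : ℝ) / p + 1) := by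
    refine Ico_subset_Ico_right ?_
    rw [add_div]
    gcongr
    exact div_le_one_of_le₀ hp (zero_le_one.trans hp)
  refine measurableSet_Ico.image_of_continuousOn_injOn (AddCircle.continuous_mk' 1).continuousOn
    fun x hx y hy hxy => ?_
  exact (AddCircle.coe_eq_coe_iff_of_mem_Ico (hsub hx) (hsub hy)).1 hxy

lemma exists_mem_gridCell {p : ℕ} (hp : 0 < p) (x : 𝕋) : ∃ k : Fin p, x ∈ gridCell p k := by
  obtain ⟨b, hb, rfl⟩ := AddCircle.eq_coe_Ico x
  have hp' : (0 : ℝ) < p := by exact_mod_cast hp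
  have hbp : 0 ≤ b * p := mul_nonneg hb.1 hp'.le
  refine ⟨⟨⌊b * p⌋₊, (Nat.floor_lt hbp).2 (by nlinarith [hb.2])⟩, b, ⟨?_, ?_⟩, rfl⟩
  · rw [div_le_iff₀ hp']
    exact Nat.floor_le hbp
  · rw [lt_div_iff₀ hp']
    exact Nat.lt_floor_add_one _

lemma dist_lt_of_mem_gridCell {p : ℕ} {k : Fin p} {x y : 𝕋} (hx : x ∈ gridCell p k)
    (hy : y ∈ gridCell p k) : dist x y < 1 / p := by
  obtain ⟨a, ha, rfl⟩ := hx
  obtain ⟨b, hb, rfl⟩ := hy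
  rw [add_div] at ha hb
  calc dist (a : 𝕋) (b : 𝕋) ≤ ‖a - b‖ := by
        rw [dist_eq_norm, ← AddCircle.coe_sub]
        exact QuotientAddGroup.norm_mk_le_norm
    _ < 1 / p := by
        rw [Real.norm_eq_abs, abs_sub_lt_iff]
        constructor <;> linarith [ha.1, ha.2, hb.1, hb.2]

lemma PMeasurable.measurableSet {p : ℕ} {A : Set 𝕋} (hA : PMeasurable p A) :
    MeasurableSet A := by
  obtain ⟨s, rfl⟩ := hA
  exact s.measurableSet_biUnion fun k _ => measurableSet_gridCell k

theorem exists_pMeasurable_between {F U : Set 𝕋} (hF : IsCompact F) (hU : IsOpen U)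
    (hFU : F ⊆ U) : ∃ p₀ : ℕ, ∀ p, p₀ ≤ p → ∃ A, PMeasurable p A ∧ F ⊆ A ∧ A ⊆ U := by
  classical
  obtain ⟨δ, hδ, hδU⟩ := hF.exists_thickening_subset_open hU hFU
  obtain ⟨p₀, hp₀⟩ := exists_nat_gt (1 / δ)
  refine ⟨p₀, fun p hp => ?_⟩
  have hp' : 1 / δ < p := hp₀.trans_le (by exact_mod_cast hp)
  have hpos : (0 : ℝ) < p := (one_div_pos.2 hδ).trans hp'
  have hcell : 1 / (p : ℝ) < δ := (one_div_lt hpos hδ).2 hp'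
  refine ⟨⋃ k ∈ Finset.univ.filter (fun k => (gridCell p k ∩ F).Nonempty), gridCell p k,
    ⟨_, rfl⟩, fun x hx => ?_, ?_⟩
  · obtain ⟨k, hk⟩ := exists_mem_gridCell (by exact_mod_cast hpos) x
    exact mem_biUnion (Finset.mem_filter.2 ⟨Finset.mem_univ k, x, hk, hx⟩) hk
  · simp only [iUnion_subset_iff, Finset.mem_filter]
    rintro k ⟨-, z, hzk, hzF⟩ y hy
    exact hδU (Metric.mem_thickening_iff.2 ⟨z, hzF, (dist_lt_of_mem_gridCell hy hzk).trans hcell⟩)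

theorem exists_pMeasurable_measure_symmDiff_lt (μ : Measure 𝕋) [IsFiniteMeasure μ]
    {C : Set 𝕋} (hC : MeasurableSet C) {ε : ENNReal} (hε : ε ≠ 0) :
    ∃ p₀ : ℕ, ∀ p, p₀ ≤ p → ∃ A, PMeasurable p A ∧ μ (C ∆ A) < ε := by
  obtain ⟨U, hCU, hU, -, hUC⟩ :=
    hC.exists_isOpen_sdiff_lt (measure_ne_top μ C) (ENNReal.half_pos hε).ne'
  obtain ⟨F, hFC, hF, hCF⟩ :=
    hC.exists_isClosed_sdiff_lt (measure_ne_top μ C) (ENNReal.half_pos hε).ne'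
  obtain ⟨p₀, hp₀⟩ := exists_pMeasurable_between hF.isCompact hU (hFC.trans hCU)
  refine ⟨p₀, fun p hp => ?_⟩
  obtain ⟨A, hA, hFA, hAU⟩ := hp₀ p hp
  have hsub : C ∆ A ⊆ (U \ C) ∪ (C \ F) := fun x hx => by
    rcases mem_symmDiff.1 hx with ⟨hxC, hxA⟩ | ⟨hxA, hxC⟩
    exacts [Or.inr ⟨hxC, fun hxF => hxA (hFA hxF)⟩, Or.inl ⟨hAU hxA, hxC⟩]
  refine ⟨A, hA, ?_⟩
  calc μ (C ∆ A) ≤ μ (U \ C) + μ (C \ F) := (measure_mono hsub).trans (measure_union_le _ _)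
    _ < ε / 2 + ε / 2 := ENNReal.add_lt_add hUC hCF
    _ = ε := ENNReal.add_halves ε

theorem Matrix.exists_mulVec_eq_zero_apply_eq_one_of_rank_submatrix {K ι n : Type*} [Field K]
    [Fintype ι] [Fintype n] [DecidableEq n] (M : Matrix ι n K) (j : n)
    (h : (M.submatrix id (Subtype.val : {k // k ≠ j} → n)).rank = Fintype.card ι) :
    ∃ v : n → K, M *ᵥ v = 0 ∧ v j = 1 := by
  set D := M.submatrix id (Subtype.val : {k // k ≠ j} → n)
  have hsurj : Function.Surjective D.mulVecLin := LinearMap.range_eq_top.1 <|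
    Submodule.eq_top_of_finrank_eq (by rw [← Matrix.rank, h, Module.finrank_fintype_fun_eq_card])
  -- Solve `D w = -(column j)` and put `1` in slot `j`.
  obtain ⟨w, hw⟩ := hsurj (-fun i => M i j)
  refine ⟨fun k => if hk : k = j then 1 else w ⟨k, hk⟩, ?_, by simp⟩
  ext i
  have hwi := congrFun hw i
  simp only [Matrix.mulVecLin_apply, Matrix.mulVec, dotProduct, D, Matrix.submatrix_apply,
    id, Pi.neg_apply] at hwi
  rw [Matrix.mulVec, dotProduct, Fintype.sum_eq_add_sum_subtype_ne _ j, dif_pos rfl, mul_one,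
    Finset.sum_congr rfl fun k _ => by rw [dif_neg k.2], hwi, Pi.zero_apply, add_neg_cancel]

section Kernel

variable {r m : ℕ} (L : Matrix (Fin r) (Fin m) ℤ)

lemma Lhom_comp {G H : Type*} [AddCommGroup G] [AddCommGroup H] (f : G →+ H) (x : Fin m → G) :
    Lhom L H (f ∘ x) = f ∘ Lhom L G x := by
  ext i
  simp [Lhom, map_sum, map_zsmul]

lemma Lhom_eq_mulVec (v : Fin m → ℚ) : Lhom L ℚ v = L.map (Int.cast : ℤ → ℚ) *ᵥ v := by
  ext i
  simp [Lhom, Matrix.mulVec, dotProduct, zsmul_eq_mul]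

lemma exists_mem_kerT_apply_eq (hsub : DeletedColumnsFullRank L) (j : Fin m) (t : 𝕋) :
    ∃ x ∈ kerT L, x j = t := by
  obtain ⟨v, hv, hvj⟩ :=
    (L.map (Int.cast : ℤ → ℚ)).exists_mulVec_eq_zero_apply_eq_one_of_rank_submatrix j
      (by rw [Fintype.card_fin]; exact hsub j)
  obtain ⟨a, rfl⟩ := QuotientAddGroup.mk_surjective t
  -- `L (v * a) = (L v) * a = 0`, pushed through the additive map `q ↦ q * a mod 1`.
  let f : ℚ →+ 𝕋 := (QuotientAddGroup.mk' _).comp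
    ((AddMonoidHom.mulRight a).comp (Rat.castHom ℝ).toAddMonoidHom)
  refine ⟨f ∘ v, ?_, by simp [f, hvj]⟩
  rw [kerT, AddMonoidHom.mem_ker, Lhom_comp, Lhom_eq_mulVec, hv]
  ext
  simp

lemma continuous_Lhom : Continuous (Lhom L 𝕋) := by
  change Continuous fun (x : Fin m → 𝕋) (i : Fin r) => ∑ j, L i j • x j
  fun_prop

instance : CompactSpace (kerT L) :=
  isCompact_iff_compactSpace.1 (isClosed_singleton.preimage (continuous_Lhom L)).isCompact

def kerEval (j : Fin m) : kerT L →+ 𝕋 :=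
  (Pi.evalAddMonoidHom (fun _ => 𝕋) j).comp (kerT L).subtype

lemma measurePreserving_kerEval (hsub : DeletedColumnsFullRank L) (j : Fin m)
    (μL : Measure (kerT L)) [μL.IsAddHaarMeasure] [IsProbabilityMeasure μL] :
    MeasurePreserving (kerEval L j) μL volume := by
  refine AddMonoidHom.measurePreserving ((continuous_apply j).comp continuous_subtype_val)
    (fun t => ?_) (by simp)
  obtain ⟨x, hx, rfl⟩ := exists_mem_kerT_apply_eq L hsub j t
  exact ⟨⟨x, hx⟩, rfl⟩

end Kernel

lemma setOf_forall_mem_symmDiff_subset {α ι : Type*} {β : ι → Type*} (f : ∀ i, α → β i)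
    (C A : ∀ i, Set (β i)) :
    {x | ∀ i, f i x ∈ C i} ∆ {x | ∀ i, f i x ∈ A i} ⊆ ⋃ i, f i ⁻¹' (C i ∆ A i) := by
  rintro x (⟨hC, hA⟩ | ⟨hA, hC⟩) <;> simp only [mem_ofPred_eq, not_forall] at hA hC
  · obtain ⟨i, hi⟩ := hA
    exact mem_iUnion.2 ⟨i, Or.inl ⟨hC i, hi⟩⟩
  · obtain ⟨i, hi⟩ := hC
    exact mem_iUnion.2 ⟨i, Or.inr ⟨hA i, hi⟩⟩

theorem abs_measureReal_setOf_forall_sub_le {α ι : Type*} [Fintype ι] [MeasurableSpace α]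
    (μ : Measure α) [IsFiniteMeasure μ] {β : ι → Type*} [∀ i, MeasurableSpace (β i)]
    {f : ∀ i, α → β i} (hf : ∀ i, Measurable (f i)) {C A : ∀ i, Set (β i)}
    (hC : ∀ i, MeasurableSet (C i)) (hA : ∀ i, MeasurableSet (A i)) :
    |μ.real {x | ∀ i, f i x ∈ C i} - μ.real {x | ∀ i, f i x ∈ A i}| ≤
      ∑ i, μ.real (f i ⁻¹' (C i ∆ A i)) := by
  have hmeas (S : ∀ i, Set (β i)) (hS : ∀ i, MeasurableSet (S i)) :
      MeasurableSet {x | ∀ i, f i x ∈ S i} := by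
    rw [ofPred_forall]
    exact .iInter fun i => hf i (hS i)
  calc _ ≤ μ.real ({x | ∀ i, f i x ∈ C i} ∆ {x | ∀ i, f i x ∈ A i}) :=
        abs_measureReal_sub_le_measureReal_symmDiff (hmeas C hC).nullMeasurableSet
          (hmeas A hA).nullMeasurableSet
    _ ≤ μ.real (⋃ i, f i ⁻¹' (C i ∆ A i)) :=
        measureReal_mono (setOf_forall_mem_symmDiff_subset f C A)
    _ ≤ ∑ i, μ.real (f i ⁻¹' (C i ∆ A i)) := measureReal_iUnion_fintype_le _

theorem approximation_lemma_general {r m : ℕ} (L : Matrix (Fin r) (Fin m) ℤ)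
    (hsub : DeletedColumnsFullRank L)
    {δ : ℝ} (hδ : 0 < δ)
    (C : Fin m → Set 𝕋) (hC : ∀ i, MeasurableSet (C i))
    (μL : Measure (kerT L)) (hHaar : μL.IsAddHaarMeasure) (hprob : IsProbabilityMeasure μL) :
    ∃ p₀ : ℕ, ∀ p : ℕ, p₀ ≤ p →
      ∃ A : Fin m → Set 𝕋,
        (∀ i, PMeasurable p (A i)) ∧
        (∀ i, (volume (symmDiff (C i) (A i))).toReal ≤ δ / m) ∧
        |(μL {x : kerT L | ∀ i, (x : Fin m → 𝕋) i ∈ C i}).toReal -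
          (μL {x : kerT L | ∀ i, (x : Fin m → 𝕋) i ∈ A i}).toReal| ≤ δ := by
  have hε (i : Fin m) : ENNReal.ofReal (δ / m) ≠ 0 := by
    have : (0 : ℝ) < m := by exact_mod_cast i.pos
    positivity
  choose p₀ hp₀ using fun i => exists_pMeasurable_measure_symmDiff_lt volume (hC i) (hε i)
  refine ⟨Finset.univ.sup p₀, fun p hp => ?_⟩
  choose A hA hCA using fun i => hp₀ i p ((Finset.le_sup (Finset.mem_univ i)).trans hp)
  have hCA' (i : Fin m) : volume.real (C i ∆ A i) ≤ δ / m :=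
    ENNReal.toReal_le_of_le_ofReal (by positivity) (hCA i).le
  refine ⟨A, hA, hCA', ?_⟩
  calc _ ≤ ∑ i, μL.real (kerEval L i ⁻¹' (C i ∆ A i)) :=
        abs_measureReal_setOf_forall_sub_le μL
          (fun i => (measurePreserving_kerEval L hsub i μL).measurable) hC
          fun i => (hA i).measurableSet
    _ = ∑ i, volume.real (C i ∆ A i) := by
        refine Finset.sum_congr rfl fun i _ => ?_
        exact (measurePreserving_kerEval L hsub i μL).measureReal_preimage
          ((hC i).symmDiff (hA i).measurableSet).nullMeasurableSet
    _ ≤ ∑ _i : Fin m, δ / m := Finset.sum_le_sum fun i _ => hCA' i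
    _ ≤ δ := by
        rw [Finset.sum_const, Finset.card_univ, Fintype.card_fin, nsmul_eq_mul]
        rcases eq_or_ne m 0 with rfl | hm
        · simpa using hδ.le
        · rw [mul_div_cancel₀ _ (Nat.cast_ne_zero.2 hm)]

/-- **Approximation by `p`-measurable sets.**
Let `L` be an `r × m` integer matrix of full rank `r` such that every `r × (m-1)` submatrix
obtained by deleting one column also has rank `r`. Let `δ > 0` and let `C₁, …, C_m` be Borel
subsets of `𝕋`. Then for every sufficiently large `p` there are `p`-measurable sets
`A₁, …, A_m ⊆ 𝕋` with `μ_𝕋(C_i Δ A_i) ≤ δ/m` for all `i` and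
`|S_L(C₁, …, C_m) - S_L(A₁, …, A_m)| ≤ δ`, where `S_L` is computed with the normalized Haar
probability measure `μL` on `ker_𝕋 L`. -/
theorem approximation_lemma {r m : ℕ} (L : Matrix (Fin r) (Fin m) ℤ)
    (hrank : (L.map (Int.cast : ℤ → ℚ)).rank = r)
    (hsub : DeletedColumnsFullRank L)
    {δ : ℝ} (hδ : 0 < δ)
    (C : Fin m → Set 𝕋) (hC : ∀ i, MeasurableSet (C i))
    (μL : Measure (kerT L)) (hHaar : μL.IsAddHaarMeasure) (hprob : IsProbabilityMeasure μL) :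
    ∃ p₀ : ℕ, ∀ p : ℕ, p₀ ≤ p →
      ∃ A : Fin m → Set 𝕋,
        (∀ i, PMeasurable p (A i)) ∧
        (∀ i, (volume (symmDiff (C i) (A i))).toReal ≤ δ / m) ∧
        |(μL {x : kerT L | ∀ i, (x : Fin m → 𝕋) i ∈ C i}).toReal -
          (μL {x : kerT L | ∀ i, (x : Fin m → 𝕋) i ∈ A i}).toReal| ≤ δ :=
  approximation_lemma_general L hsub hδ C hC μL hHaar hprob
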